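/- Let X ⊆ ℝ be measurable of finite length and f ∈ L¹(X). For t ∈ [0,|X|] define f★(t) = sup{∫_E f dx : E ⊆ X measurable, |E| = t}. Then f★(t) = ∫_0^t f*(s) ds, where f* is the decreasing rearrangement of f. -/

import Mathlib

open Real MeasureTheory Set

noncomputable section

/-- The star function of `f` on a measurable set `X ⊆ ℝ`:
`f★(t) = sup {∫_E f : E ⊆ X measurable, |E| = t}`. -/
def starFn (X : Set ℝ) (f : ℝ → ℝ) (t : ℝ) : ℝ :=
  sSup {r : ℝ | ∃ E : Set ℝ, E ⊆ X ∧ MeasurableSet E ∧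
    (volume E).toReal = t ∧ r = ∫ x in E, f x}

/-- The decreasing rearrangement of `f : X → ℝ`, evaluated at `t`. -/
def decRearrOn (X : Set ℝ) (f : ℝ → ℝ) (t : ℝ) : ℝ :=
  sInf {s : ℝ | (volume {x : ℝ | x ∈ X ∧ s < f x}).toReal ≤ t}

/-!
For `0 < u < |X|` the right continuity of the distribution function `s ↦ |X ∩ {f > s}|` gives
`s < f*(u) ↔ u < |X ∩ {f > s}|`, so `f*` on `(0, |X|)` is equimeasurable with `f` on `X`.

Fix `0 < t < |X|` and `c = f*(t)`. Every `E ⊆ X` with `|E| = t` has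
`∫_E f = c t + ∫_E (f - c) ≤ c t + ∫_X (f - c)⁺`, with equality when `{f > c} ⊆ E ⊆ {f ≥ c}`;
such an `E` exists because `|{f > c}| ≤ t ≤ |{f ≥ c}|` and `τ ↦ |A ∪ (B ∩ (-∞, τ])|` is continuous.
Since `f*` is decreasing, `∫_0^t f* = c t + ∫_0^{|X|} (f* - c)⁺`, and by equimeasurability the
last integral is `∫_X (f - c)⁺`.
-/

open Filter Topology ProbabilityTheory
open scoped ENNReal

namespace MeasureTheory

theorem Measure.ext_of_Ioi {α : Type*} [TopologicalSpace α] {m : MeasurableSpace α}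
    [SecondCountableTopology α] [LinearOrder α] [OrderTopology α] [BorelSpace α]
    (μ ν : Measure α) [IsFiniteMeasure μ] (huniv : μ univ = ν univ)
    (h : ∀ a, μ (Ioi a) = ν (Ioi a)) : μ = ν := by
  have : IsFiniteMeasure ν := ⟨huniv ▸ measure_lt_top μ univ⟩
  refine ext_of_Iic μ ν fun a => ?_
  rw [← compl_Ioi, measure_compl measurableSet_Ioi (measure_ne_top _ _),
    measure_compl measurableSet_Ioi (measure_ne_top _ _), huniv, h]

variable {α : Type*} [MeasurableSpace α] {μ : Measure α}

section PosPart

variable {X E : Set α} {g : α → ℝ}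

lemma setIntegral_le_mul_add_integral_posPart (hEX : E ⊆ X) (hX : μ X ≠ ∞)
    (hg : IntegrableOn g X μ) (c : ℝ) :
    ∫ x in E, g x ∂μ ≤ c * μ.real E + ∫ x in X, max (g x - c) 0 ∂μ := by
  have hgc : IntegrableOn (fun x => g x - c) X μ := hg.sub (integrableOn_const hX)
  calc ∫ x in E, g x ∂μ = ∫ x in E, (g x - c) ∂μ + c * μ.real E := by
        rw [integral_sub (hg.mono_set hEX) (integrableOn_const (measure_ne_top_of_subset hEX hX)),
          setIntegral_const, smul_eq_mul]
        ring
    _ ≤ ∫ x in E, max (g x - c) 0 ∂μ + c * μ.real E :=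
        add_le_add_left (integral_mono (hgc.mono_set hEX) (hgc.mono_set hEX).pos_part
          fun x => le_max_left _ _) _
    _ ≤ ∫ x in X, max (g x - c) 0 ∂μ + c * μ.real E :=
        add_le_add_left (setIntegral_mono_set hgc.pos_part
          (.of_forall fun x => le_max_right _ _) hEX.eventuallyLE) _
    _ = _ := add_comm _ _

lemma setIntegral_eq_mul_add_integral_posPart (hXm : MeasurableSet X) (hX : μ X ≠ ∞)
    (hg : IntegrableOn g X μ) {c : ℝ} (hE : MeasurableSet E) (hlo : X ∩ {x | c < g x} ⊆ E)
    (hhi : E ⊆ X ∩ {x | c ≤ g x}) :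
    ∫ x in E, g x ∂μ = c * μ.real E + ∫ x in X, max (g x - c) 0 ∂μ := by
  have hEX : E ⊆ X := hhi.trans inter_subset_left
  have hpos : ∫ x in X, max (g x - c) 0 ∂μ = ∫ x in E, (g x - c) ∂μ := by
    rw [setIntegral_eq_of_subset_of_forall_sdiff_eq_zero hXm hEX fun x hx =>
      max_eq_right (sub_nonpos.2 (not_lt.1 fun h => hx.2 (hlo ⟨hx.1, h⟩)))]
    exact setIntegral_congr_fun hE fun x hx => max_eq_left (sub_nonneg.2 (hhi hx).2)
  rw [hpos, integral_sub (hg.mono_set hEX) (integrableOn_const (measure_ne_top_of_subset hEX hX)),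
    setIntegral_const, smul_eq_mul]
  ring

end PosPart

lemma integral_Ioo_eq_mul_add_integral_posPart {φ : ℝ → ℝ} {a t T : ℝ}
    (hφ : AntitoneOn φ (Ioo a T)) (hint : IntegrableOn φ (Ioo a T)) (ht : t ∈ Ioo a T) :
    ∫ u in Ioo a t, φ u = φ t * (t - a) + ∫ u in Ioo a T, max (φ u - φ t) 0 := by
  have hsub : Ioo a t ⊆ Ioo a T := Ioo_subset_Ioo_right ht.2.le
  have hpos : ∫ u in Ioo a T, max (φ u - φ t) 0 = ∫ u in Ioo a t, (φ u - φ t) := by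
    rw [setIntegral_eq_of_subset_of_forall_sdiff_eq_zero measurableSet_Ioo hsub fun u hu =>
      max_eq_right (sub_nonpos.2 (hφ ht hu.1 (not_lt.1 fun h => hu.2 ⟨hu.1.1, h⟩)))]
    exact setIntegral_congr_fun measurableSet_Ioo fun u hu =>
      max_eq_left (sub_nonneg.2 (hφ (hsub hu) ht hu.2.le))
  rw [hpos, integral_sub (hint.mono_set hsub) (integrableOn_const measure_Ioo_lt_top.ne),
    setIntegral_const, smul_eq_mul, Real.volume_real_Ioo_of_le ht.1.le]
  ring

lemma exists_measurableSet_between_volume_eq {A B : Set ℝ} (hA : MeasurableSet A)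
    (hB : MeasurableSet B) (hAB : A ⊆ B) (hBfin : volume B ≠ ∞) {r : ℝ≥0∞}
    (hAr : volume A ≤ r) (hrB : r ≤ volume B) :
    ∃ E, MeasurableSet E ∧ A ⊆ E ∧ E ⊆ B ∧ volume E = r := by
  rcases hAr.eq_or_lt with rfl | hAr
  · exact ⟨A, hA, subset_rfl, hAB, rfl⟩
  rcases hrB.eq_or_lt with rfl | hrB
  · exact ⟨B, hB, hAB, subset_rfl, rfl⟩
  set F : ℝ → Set ℝ := fun τ => A ∪ B ∩ Iic τ
  have hFB (τ : ℝ) : F τ ⊆ B := union_subset hAB inter_subset_left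
  have hFm : Monotone F := fun σ τ hστ => union_subset_union_right _
    (inter_subset_inter_right _ (Iic_subset_Iic.2 hστ))
  have hlip : LipschitzWith 1 fun τ => volume.real (F τ) := by
    refine LipschitzWith.of_le_add fun σ τ => ?_
    have hcover : F σ ⊆ F τ ∪ Ioc τ σ := fun x hx => by
      rcases hx with hx | ⟨hxB, hxσ⟩
      · exact Or.inl (Or.inl hx)
      · rcases le_or_gt x τ with hxτ | hxτ
        exacts [Or.inl (Or.inr ⟨hxB, hxτ⟩), Or.inr ⟨hxτ, hxσ⟩]
    calc volume.real (F σ) ≤ volume.real (F τ) + volume.real (Ioc τ σ) :=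
          (measureReal_mono hcover (measure_union_lt_top
            (measure_lt_top_of_subset (hFB τ) hBfin) measure_Ioc_lt_top).ne).trans
            (measureReal_union_le _ _)
      _ ≤ volume.real (F τ) + dist σ τ := by
          rw [Real.volume_real_Ioc, Real.dist_eq]
          gcongr
          exact max_le (le_abs_self _) (abs_nonneg _)
  have hcont : Continuous fun τ => volume (F τ) := by
    refine (ENNReal.continuous_ofReal.comp hlip.continuous).congr fun τ => ?_
    exact ENNReal.ofReal_toReal (measure_ne_top_of_subset (hFB τ) hBfin)
  have hbot : Tendsto (fun τ => volume (F τ)) atBot (𝓝 (volume A)) := by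
    have hinter : ⋂ τ, F τ = A := by
      refine subset_antisymm (fun x hx => ?_) (subset_iInter fun τ => subset_union_left)
      rcases mem_iInter.1 hx (x - 1) with hxA | ⟨-, hx1⟩
      exacts [hxA, absurd (mem_Iic.1 hx1) (by linarith)]
    rw [← hinter]
    exact tendsto_measure_iInter_atBot
      (fun τ => (hA.union (hB.inter measurableSet_Iic)).nullMeasurableSet) hFm
      ⟨0, measure_ne_top_of_subset (hFB 0) hBfin⟩
  have htop : Tendsto (fun τ => volume (F τ)) atTop (𝓝 (volume B)) := by
    have hunion : ⋃ τ, F τ = B := subset_antisymm (iUnion_subset hFB) fun x hx =>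
      mem_iUnion.2 ⟨x, Or.inr ⟨hx, self_mem_Iic⟩⟩
    rw [← hunion]
    exact tendsto_measure_iUnion_atTop hFm
  obtain ⟨τ, -, hτ⟩ := isPreconnected_univ.intermediate_value_Ioo (by simp) (by simp)
    hcont.continuousOn hbot htop ⟨hAr, hrB⟩
  exact ⟨F τ, hA.union (hB.inter measurableSet_Iic), subset_union_left, hFB τ, hτ⟩

section Rearrangement

variable {f g : α → ℝ}

/-- Only meaningful for `0 < u < μ univ`: outside this range the set may be empty or unbounded
below, and `sInf` then returns `0`. -/
def decRearr (μ : Measure α) (f : α → ℝ) (u : ℝ) : ℝ :=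
  sInf {s | μ.real {x | s < f x} ≤ u}

lemma decRearr_congr (h : f =ᵐ[μ] g) : decRearr μ f = decRearr μ g := by
  have hlevel (s : ℝ) : μ {x | s < f x} = μ {x | s < g x} :=
    measure_congr <| eventuallyEq_set.2 <| h.mono fun x hx => by simp only [mem_ofPred_eq, hx]
  funext u
  simp only [decRearr, measureReal_def, hlevel]

lemma measure_lt_le_of_forall_gt {s : ℝ} {a : ℝ≥0∞} (h : ∀ r > s, μ {x | r < f x} ≤ a) :
    μ {x | s < f x} ≤ a := by
  obtain ⟨u, hu_anti, hu_gt, hu_lim⟩ := exists_seq_strictAnti_tendsto s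
  have hunion : {x | s < f x} = ⋃ n, {x | u n < f x} := by
    ext x
    simp only [mem_ofPred_eq, mem_iUnion]
    exact ⟨fun hx => (hu_lim.eventually (gt_mem_nhds hx)).exists,
      fun ⟨n, hn⟩ => (hu_gt n).trans hn⟩
  have hmono : Monotone fun n => {x | u n < f x} := fun m n hmn x hx =>
    (hu_anti.antitone hmn).trans_lt hx
  rw [hunion, hmono.measure_iUnion]
  exact iSup_le fun n => h _ (hu_gt n)

section Finite

variable [IsFiniteMeasure μ]

lemma exists_measureReal_lt_le (hf : AEMeasurable f μ) {u : ℝ} (hu : 0 < u) :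
    ∃ s, μ.real {x | s < f x} ≤ u := by
  have hlim : Tendsto (fun n : ℕ => μ {x | (n : ℝ) < f x}) atTop (𝓝 0) := by
    have hinter : ⋂ n : ℕ, {x | (n : ℝ) < f x} = ∅ := by
      ext x
      simpa using exists_nat_ge (f x)
    rw [← measure_empty (μ := μ), ← hinter]
    exact tendsto_measure_iInter_atTop (fun n => nullMeasurableSet_lt aemeasurable_const hf)
      (fun m n hmn x (hx : (n : ℝ) < f x) => (Nat.mono_cast hmn).trans_lt hx)
      ⟨0, measure_ne_top μ _⟩
  obtain ⟨n, hn⟩ := (hlim.eventually (gt_mem_nhds (ENNReal.ofReal_pos.2 hu))).exists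
  exact ⟨n, ENNReal.toReal_le_of_le_ofReal hu.le hn.le⟩

lemma exists_lt_measureReal_lt {u : ℝ} (hu : u < μ.real univ) :
    ∃ s, u < μ.real {x | s < f x} := by
  have hunion : ⋃ s : ℝ, {x | s < f x} = univ :=
    eq_univ_of_forall fun x => mem_iUnion.2 (exists_lt (f x))
  have hlim : Tendsto (fun s : ℝ => μ.real {x | s < f x}) atBot (𝓝 (μ.real univ)) := by
    rw [measureReal_def, ← hunion]
    exact (ENNReal.tendsto_toReal (measure_ne_top _ _)).comp
      (tendsto_measure_iUnion_atBot fun r s hrs x hx => hrs.trans_lt hx)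
  exact (hlim.eventually (lt_mem_nhds hu)).exists

lemma lt_decRearr_iff (hf : AEMeasurable f μ) {u s : ℝ} (hu : 0 < u) (huT : u < μ.real univ) :
    s < decRearr μ f u ↔ u < μ.real {x | s < f x} := by
  have hne : {s | μ.real {x | s < f x} ≤ u}.Nonempty := exists_measureReal_lt_le hf hu
  have hbdd : BddBelow {s | μ.real {x | s < f x} ≤ u} := by
    obtain ⟨s₀, hs₀⟩ := exists_lt_measureReal_lt (f := f) huT
    refine ⟨s₀, fun s hs => le_of_not_gt fun hlt => ?_⟩
    exact (hs₀.trans_le (measureReal_mono fun x hx => hlt.trans hx)).not_ge hs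
  refine ⟨fun hs => lt_of_not_ge fun h => hs.not_ge (csInf_le hbdd h), fun hs => ?_⟩
  by_contra! hle
  have : μ {x | s < f x} ≤ ENNReal.ofReal u := measure_lt_le_of_forall_gt fun r hr => by
    obtain ⟨s', hs', hs'r⟩ := exists_lt_of_csInf_lt hne (hle.trans_lt hr)
    exact (measure_mono fun x hx => hs'r.trans hx).trans
      ((ENNReal.le_ofReal_iff_toReal_le (measure_ne_top _ _) hu.le).2 hs')
  exact hs.not_ge (ENNReal.toReal_le_of_le_ofReal hu.le this)

lemma decRearr_antitoneOn (hf : AEMeasurable f μ) :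
    AntitoneOn (decRearr μ f) (Ioo 0 (μ.real univ)) := by
  intro u hu v hv huv
  refine le_of_forall_lt fun s hs => ?_
  rw [lt_decRearr_iff hf hv.1 hv.2] at hs
  exact (lt_decRearr_iff hf hu.1 hu.2).2 (huv.trans_lt hs)

lemma identDistrib_decRearr (hf : AEMeasurable f μ) :
    IdentDistrib f (decRearr μ f) μ (volume.restrict (Ioo 0 (μ.real univ))) := by
  have hmeas : AEMeasurable (decRearr μ f) (volume.restrict (Ioo 0 (μ.real univ))) :=
    aemeasurable_restrict_of_antitoneOn measurableSet_Ioo (decRearr_antitoneOn hf)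
  refine ⟨hf, hmeas, Measure.ext_of_Ioi _ _ ?_ fun s => ?_⟩
  · rw [Measure.map_apply_of_aemeasurable hf MeasurableSet.univ,
      Measure.map_apply_of_aemeasurable hmeas MeasurableSet.univ, preimage_univ, preimage_univ,
      Measure.restrict_apply_univ, Real.volume_Ioo, sub_zero, measureReal_def,
      ENNReal.ofReal_toReal (measure_ne_top _ _)]
  have hlevel : decRearr μ f ⁻¹' Ioi s ∩ Ioo 0 (μ.real univ) = Ioo 0 (μ.real {x | s < f x}) := by
    ext u
    simp only [mem_inter_iff, mem_preimage, mem_Ioi, mem_Ioo]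
    constructor
    · rintro ⟨hs, hu, huT⟩
      exact ⟨hu, (lt_decRearr_iff hf hu huT).1 hs⟩
    · rintro ⟨hu, hus⟩
      have huT : u < μ.real univ := hus.trans_le (measureReal_mono (subset_univ _))
      exact ⟨(lt_decRearr_iff hf hu huT).2 hus, hu, huT⟩
  rw [Measure.map_apply_of_aemeasurable hf measurableSet_Ioi,
    Measure.map_apply_of_aemeasurable hmeas measurableSet_Ioi,
    Measure.restrict_apply' measurableSet_Ioo, hlevel, Real.volume_Ioo, sub_zero, measureReal_def,
    ENNReal.ofReal_toReal (measure_ne_top _ _)]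
  rfl

lemma measure_decRearr_lt_le (hf : AEMeasurable f μ) {u : ℝ} (hu : 0 < u) (huT : u < μ.real univ) :
    μ {x | decRearr μ f u < f x} ≤ ENNReal.ofReal u :=
  (ENNReal.le_ofReal_iff_toReal_le (measure_ne_top _ _) hu.le).2 <|
    not_lt.1 fun h => lt_irrefl _ ((lt_decRearr_iff hf hu huT).2 h)

lemma le_measure_decRearr_le (hf : AEMeasurable f μ) {u : ℝ} (hu : 0 < u) (huT : u < μ.real univ) :
    ENNReal.ofReal u ≤ μ {x | decRearr μ f u ≤ f x} := by
  change _ ≤ μ (f ⁻¹' Ici (decRearr μ f u))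
  rw [(identDistrib_decRearr hf).measure_mem_eq measurableSet_Ici,
    Measure.restrict_apply' measurableSet_Ioo, show ENNReal.ofReal u = volume (Ioo 0 u) by simp]
  exact measure_mono fun v hv =>
    ⟨decRearr_antitoneOn hf ⟨hv.1, hv.2.trans huT⟩ ⟨hu, huT⟩ hv.2.le, hv.1, hv.2.trans huT⟩

lemma integral_decRearr (hf : AEMeasurable f μ) :
    ∫ v in Ioo 0 (μ.real univ), decRearr μ f v = ∫ x, f x ∂μ :=
  (identDistrib_decRearr hf).integral_eq.symm

lemma integral_Ioo_decRearr (hf : AEMeasurable f μ) (hfi : Integrable f μ) {u : ℝ} (hu : 0 < u)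
    (huT : u < μ.real univ) :
    ∫ v in Ioo 0 u, decRearr μ f v =
      decRearr μ f u * u + ∫ x, max (f x - decRearr μ f u) 0 ∂μ := by
  have h := identDistrib_decRearr hf
  rw [integral_Ioo_eq_mul_add_integral_posPart (decRearr_antitoneOn hf) (h.integrable_snd hfi)
    ⟨hu, huT⟩, sub_zero]
  exact congrArg _
    (h.comp ((measurable_id.sub_const (decRearr μ f u)).max measurable_const)).integral_eq.symm

end Finite

end Rearrangement

end MeasureTheory

section Star

variable {X : Set ℝ} {f g : ℝ → ℝ}

lemma starFn_congr (h : f =ᵐ[volume.restrict X] g) : starFn X f = starFn X g := by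
  funext t
  simp only [starFn]
  congr 1
  ext r
  refine exists_congr fun E => and_congr_right fun hEX => ?_
  rw [integral_congr_ae (ae_restrict_of_ae_restrict_of_subset hEX h)]

lemma decRearrOn_eq_decRearr (hX : MeasurableSet X) :
    decRearrOn X f = decRearr (volume.restrict X) f := by
  funext u
  simp only [decRearrOn, decRearr, measureReal_def, Measure.restrict_apply' hX, inter_comm,
    ofPred_and, ofPred_mem_eq]

lemma starFn_zero (hXfin : volume X ≠ ∞) : starFn X f 0 = 0 := by
  unfold starFn
  refine IsGreatest.csSup_eq ⟨⟨∅, empty_subset X, .empty, by simp, by simp⟩, ?_⟩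
  rintro r ⟨E, hEX, -, hE, rfl⟩
  rw [setIntegral_measure_zero _ ((ENNReal.toReal_eq_zero_iff _).1 hE |>.resolve_right
    (measure_ne_top_of_subset hEX hXfin))]

lemma starFn_volume (hX : MeasurableSet X) (hXfin : volume X ≠ ∞) :
    starFn X f (volume X).toReal = ∫ x in X, f x := by
  refine IsGreatest.csSup_eq ⟨⟨X, subset_rfl, hX, rfl, rfl⟩, ?_⟩
  rintro r ⟨E, hEX, hE, hEt, rfl⟩
  refine (setIntegral_congr_set (ae_eq_of_subset_of_measure_ge hEX ?_ hE.nullMeasurableSet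
    hXfin)).le
  rw [← ENNReal.toReal_le_toReal hXfin (measure_ne_top_of_subset hEX hXfin), hEt]

lemma starFn_eq_mul_add_integral_posPart (hX : MeasurableSet X) (hXfin : volume X ≠ ∞)
    (hg : Measurable g) (hgi : IntegrableOn g X) {t c : ℝ} (ht : 0 ≤ t)
    (hlo : volume (X ∩ {x | c < g x}) ≤ ENNReal.ofReal t)
    (hhi : ENNReal.ofReal t ≤ volume (X ∩ {x | c ≤ g x})) :
    starFn X g t = c * t + ∫ x in X, max (g x - c) 0 := by
  obtain ⟨E, hEm, hlo', hhi', hE⟩ := exists_measurableSet_between_volume_eq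
    (hX.inter (measurableSet_lt measurable_const hg))
    (hX.inter (measurableSet_le measurable_const hg))
    (inter_subset_inter_right _ fun x (hx : c < g x) => (hx.le : c ≤ g x))
    (measure_ne_top_of_subset inter_subset_left hXfin) hlo hhi
  have hEt : (volume E).toReal = t := by rw [hE, ENNReal.toReal_ofReal ht]
  refine IsGreatest.csSup_eq ⟨⟨E, hhi'.trans inter_subset_left, hEm, hEt, ?_⟩, ?_⟩
  · rw [setIntegral_eq_mul_add_integral_posPart hX hXfin hgi hEm hlo' hhi', measureReal_def, hEt]
  · rintro r ⟨E, hEX, -, hEt, rfl⟩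
    simpa [measureReal_def, hEt] using setIntegral_le_mul_add_integral_posPart hEX hXfin hgi c

end Star

theorem starFn_eq_integral_decRearr (X : Set ℝ) (hX : MeasurableSet X)
    (hXfin : volume X < ⊤) (f : ℝ → ℝ) (hf : IntegrableOn f X) :
    ∀ t ∈ Icc 0 (volume X).toReal,
      starFn X f t = ∫ s in (0:ℝ)..t, decRearrOn X f s := by
  rintro t ⟨ht0, htT⟩
  set μ := volume.restrict X
  obtain ⟨g, hg, hfg⟩ : ∃ g, Measurable g ∧ f =ᵐ[μ] g :=
    ⟨_, hf.aemeasurable.measurable_mk, hf.aemeasurable.ae_eq_mk⟩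
  have hgi : Integrable g μ := hf.congr hfg
  have : IsFiniteMeasure μ := isFiniteMeasure_restrict.2 hXfin.ne
  have hT : μ.real univ = (volume X).toReal := measureReal_restrict_apply_univ X
  rw [starFn_congr hfg, decRearrOn_eq_decRearr hX, decRearr_congr hfg,
    intervalIntegral.integral_of_le ht0, integral_Ioc_eq_integral_Ioo]
  rcases ht0.eq_or_lt with rfl | ht0
  · simp [starFn_zero hXfin.ne]
  rcases htT.eq_or_lt with rfl | htT
  · rw [starFn_volume hX hXfin.ne, ← hT, integral_decRearr hg.aemeasurable]
  rw [← hT] at htT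
  have hlevel (p : ℝ → Prop) : volume (X ∩ {x | p (g x)}) = μ {x | p (g x)} := by
    rw [Measure.restrict_apply' hX, inter_comm]
  rw [integral_Ioo_decRearr hg.aemeasurable hgi ht0 htT,
    starFn_eq_mul_add_integral_posPart hX hXfin.ne hg hgi ht0.le]
  · rw [hlevel (decRearr μ g t < ·)]
    exact measure_decRearr_lt_le hg.aemeasurable ht0 htT
  · rw [hlevel (decRearr μ g t ≤ ·)]
    exact le_measure_decRearr_le hg.aemeasurable ht0 htT
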